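/- Let G be a group with presentation ⟨g₁, …, g_h | r₁, …, r_k⟩, let ρ : G → GL_{n+1}(ℝ) be a representation with M_i = ρ(g_i), and suppose matrices D₁, …, D_h are such that for every relator word r_j, the first-order term vanishes: d/dt r_j(M₁+tD₁, …, M_h+tD_h)|_{t=0} = 0. Then the assignment ζ(w) = d/dt w(M₁+tD₁, …, M_h+tD_h)|_{t=0} is well-defined on G (independent of the word w representing a given group element) and satisfies the Leibniz rule ζ(gh) = ζ(g)ρ(h) + ρ(g)ζ(h). -/
import Mathlib


open Matrix

/-- Let `G = ⟨g₁,…,g_h | rels⟩` be a presented group,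
`ρ : G → GL_{n+1}(ℝ)` a representation, and let `ζF` be the word-derivative on the
free group determined by the directions `D i` at the generators, i.e. the map
satisfying `ζF (of i) = D i` and the Leibniz rules for products and inverses with
respect to the lifted representation `w ↦ ρ (mk w)`.  If the first-order term
vanishes at every relator (`ζF r = 0` for `r ∈ rels`), then `ζF` descends to a
well-defined map `ζ` on `G`, and `ζ` satisfies the Leibniz rule
`ζ (g*h) = ζ g * ρ h + ρ g * ζ h`. -/
theorem word_derivative_descends {h n : ℕ} (rels : Set (FreeGroup (Fin h)))
    (ρ : PresentedGroup rels →* (Matrix (Fin (n + 1)) (Fin (n + 1)) ℝ)ˣ)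
    (D : Fin h → Matrix (Fin (n + 1)) (Fin (n + 1)) ℝ)
    (ζF : FreeGroup (Fin h) → Matrix (Fin (n + 1)) (Fin (n + 1)) ℝ)
    (hgen : ∀ i : Fin h, ζF (FreeGroup.of i) = D i)
    (hleibniz : ∀ w₁ w₂ : FreeGroup (Fin h),
      ζF (w₁ * w₂) =
        ζF w₁ * ((ρ (PresentedGroup.mk rels w₂) : (Matrix (Fin (n + 1)) (Fin (n + 1)) ℝ)ˣ) : Matrix (Fin (n + 1)) (Fin (n + 1)) ℝ) +
          ((ρ (PresentedGroup.mk rels w₁)) : Matrix (Fin (n + 1)) (Fin (n + 1)) ℝ) * ζF w₂)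
    (hinv : ∀ w : FreeGroup (Fin h),
      ζF w⁻¹ =
        -(((ρ (PresentedGroup.mk rels w))⁻¹ : Matrix (Fin (n + 1)) (Fin (n + 1)) ℝ) * ζF w *
            ((ρ (PresentedGroup.mk rels w))⁻¹ : Matrix (Fin (n + 1)) (Fin (n + 1)) ℝ)))
    (hrel : ∀ r ∈ rels, ζF r = 0) :
    ∃ ζ : PresentedGroup rels → Matrix (Fin (n + 1)) (Fin (n + 1)) ℝ,
      (∀ w : FreeGroup (Fin h), ζ (PresentedGroup.mk rels w) = ζF w) ∧
      (∀ g g' : PresentedGroup rels, ζ (g * g') = ζ g * ((ρ g') : Matrix (Fin (n + 1)) (Fin (n + 1)) ℝ) + ((ρ g) : Matrix (Fin (n + 1)) (Fin (n + 1)) ℝ) * ζ g') := by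
  classical
  -- ζF vanishes at 1
  have hone : ζF 1 = 0 := by
    have h2 := hleibniz 1 1
    simp only [one_mul, _root_.map_one, Units.val_one, mul_one] at h2
    exact (left_eq_add.mp h2)
  -- the subgroup of words with vanishing derivative and trivial image
  let H : Subgroup (FreeGroup (Fin h)) :=
    { carrier := {w | ζF w = 0 ∧ PresentedGroup.mk rels w = 1}
      one_mem' := ⟨hone, map_one _⟩
      mul_mem' := by
        rintro a b ⟨ha, ha1⟩ ⟨hb, hb1⟩
        refine ⟨?_, by simp [_root_.map_mul, ha1, hb1]⟩
        rw [hleibniz a b, ha, hb]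
        simp
      inv_mem' := by
        rintro a ⟨ha, ha1⟩
        refine ⟨?_, by simp [ha1]⟩
        rw [hinv a, ha]
        simp }
  have Hnormal : H.Normal := by
    constructor
    intro m hm g
    obtain ⟨hm0, hm1⟩ := hm
    refine ⟨?_, by simp [_root_.map_mul, hm1]⟩
    have e1 : ζF (m * g⁻¹) = ζF g⁻¹ := by
      rw [hleibniz m g⁻¹, hm0, hm1]
      simp
    have e2 : ζF (g * (m * g⁻¹)) = 0 := by
      rw [hleibniz g (m * g⁻¹), e1, hinv g]
      simp only [_root_.map_mul, map_inv, hm1, one_mul, ← Matrix.coe_units_inv]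
      have hc : ((ρ (PresentedGroup.mk rels g)) : Matrix (Fin (n + 1)) (Fin (n + 1)) ℝ) *
          (((ρ (PresentedGroup.mk rels g))⁻¹ : (Matrix (Fin (n + 1)) (Fin (n + 1)) ℝ)ˣ) : Matrix (Fin (n + 1)) (Fin (n + 1)) ℝ) = 1 :=
        Units.mul_inv _
      rw [mul_neg, ← mul_assoc, ← mul_assoc, hc, one_mul]
      exact add_neg_cancel _
    have : g * m * g⁻¹ = g * (m * g⁻¹) := by group
    rw [this]
    exact e2
  -- normal closure is contained in H
  have hNC : Subgroup.normalClosure rels ≤ H := by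
    apply Subgroup.normalClosure_le_normal
    intro r hr
    exact ⟨hrel r hr, by
      have : r ∈ Subgroup.normalClosure rels := Subgroup.subset_normalClosure hr
      exact (QuotientGroup.eq_one_iff r).mpr this⟩
  -- well-definedness
  have hwd : ∀ w w' : FreeGroup (Fin h),
      PresentedGroup.mk rels w = PresentedGroup.mk rels w' → ζF w = ζF w' := by
    intro w w' hww
    have hmem : w⁻¹ * w' ∈ Subgroup.normalClosure rels := by
      rw [← QuotientGroup.eq]
      exact hww
    obtain ⟨h0, h1⟩ := hNC hmem
    have : ζF (w * (w⁻¹ * w')) = ζF w := by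
      rw [hleibniz w (w⁻¹ * w'), h0, h1]
      simp
    calc ζF w = ζF (w * (w⁻¹ * w')) := this.symm
      _ = ζF w' := by rw [mul_inv_cancel_left]
  -- define ζ via representatives
  refine ⟨fun g => ζF (g.out), fun w => ?_, fun g g' => ?_⟩
  · exact hwd _ _ (QuotientGroup.out_eq' _)
  · obtain ⟨w, rfl⟩ := PresentedGroup.mk_surjective rels g
    obtain ⟨w', rfl⟩ := PresentedGroup.mk_surjective rels g'
    have e0 : (PresentedGroup.mk rels w) * (PresentedGroup.mk rels w') =
        PresentedGroup.mk rels (w * w') := (map_mul _ _ _).symm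
    have e1 : ζF ((PresentedGroup.mk rels w * PresentedGroup.mk rels w').out) = ζF (w * w') := by
      apply hwd
      rw [e0]
      exact QuotientGroup.out_eq' _
    have e2 : ζF ((PresentedGroup.mk rels w).out) = ζF w :=
      hwd _ _ (QuotientGroup.out_eq' _)
    have e3 : ζF ((PresentedGroup.mk rels w').out) = ζF w' :=
      hwd _ _ (QuotientGroup.out_eq' _)
    simp only [e1, e2, e3, hleibniz w w']
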